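/- arXiv:2407.18678 — 2 statements merged into one kernel-verified Lean document; each statement's English description precedes it below -/
import Mathlib

section
/- For all integers e ≤ −1 and all integers r with 4r ≥ (15−8e)²·(7−4e), there exists a positive integer s such that 4s²(2−e) − 4 ≥ 4r and 4r ≥ 4s²(2−e) − s². -/
/-- For `e ≤ −1` and `4r ≥ (15−8e)²(7−4e)` there is a positive integer `s`
with `4s²(2−e) − 4 ≥ 4r` and `4r ≥ 4s²(2−e) − s²`. -/
theorem stmt_4 (e r : ℤ) (he : e ≤ -1) (hr : 4 * r ≥ (15 - 8 * e) ^ 2 * (7 - 4 * e)) :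
    ∃ s : ℤ, 0 < s ∧ 4 * s ^ 2 * (2 - e) - 4 ≥ 4 * r ∧ 4 * r ≥ 4 * s ^ 2 * (2 - e) - s ^ 2 := by
  classical
  set a : ℤ := 15 - 8 * e with ha
  have hinh : ∃ s : ℤ, a ≤ s ∧ s ^ 2 * (7 - 4 * e) ≤ 4 * r :=
    ⟨a, le_refl a, by nlinarith⟩
  have hbdd : ∃ b : ℤ, ∀ s : ℤ, (a ≤ s ∧ s ^ 2 * (7 - 4 * e) ≤ 4 * r) → s ≤ b := by
    refine ⟨4 * r, fun s ⟨h1, h2⟩ => ?_⟩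
    nlinarith
  obtain ⟨s, ⟨hs1, hs2⟩, hmax⟩ :=
    Int.exists_greatest_of_bdd (P := fun s => a ≤ s ∧ s ^ 2 * (7 - 4 * e) ≤ 4 * r) hbdd hinh
  refine ⟨s, by nlinarith, ?_, by nlinarith⟩
  have hnot : ¬ (a ≤ s + 1 ∧ (s + 1) ^ 2 * (7 - 4 * e) ≤ 4 * r) := by
    intro h
    have := hmax (s + 1) h
    omega
  have h1 : a ≤ s + 1 := by omega
  have h2 : (s + 1) ^ 2 * (7 - 4 * e) > 4 * r := by
    by_contra h
    exact hnot ⟨h1, by omega⟩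
  nlinarith
end

section
/- Let e, a, b, g, α, β be integers with e ≤ −1, a ≥ 1, 2b > ae, g ≥ 0, α ≥ 1, β ≤ −1, and 2β ≥ αe, and let r, ℓ be real numbers with ℓ > 0. If √(r/ℓ)·(−aαe + aβ + bα) < 2α + 2β − αe − 2αg − 1, then r < (4−2e)²·ℓ. -/
theorem stmt_10 (e a b g α β : ℤ) (he : e ≤ -1) (ha : 1 ≤ a) (hb : 2 * b > a * e)
    (hg : 0 ≤ g) (hα : 1 ≤ α) (hβ : β ≤ -1) (hβe : 2 * β ≥ α * e)
    (r ℓ : ℝ) (hℓ : 0 < ℓ)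
    (h : Real.sqrt (r / ℓ) * ((-(a * α * e) + a * β + b * α : ℤ) : ℝ)
        < ((2 * α + 2 * β - α * e - 2 * α * g - 1 : ℤ) : ℝ)) :
    r < ((4 - 2 * e : ℤ) : ℝ) ^ 2 * ℓ := by
  have hM : (1:ℤ) ≤ -(a * α * e) + a * β + b * α := by
    nlinarith [mul_nonneg (by linarith : (0:ℤ) ≤ 2*b - a*e - 1) (by linarith : (0:ℤ) ≤ α),
      mul_nonneg (by linarith : (0:ℤ) ≤ a - 1) (by linarith : (0:ℤ) ≤ 2*β - α*e)]
  have hN : (2 * α + 2 * β - α * e - 2 * α * g - 1 : ℤ)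
      ≤ (4 - 2*e) * (-(a * α * e) + a * β + b * α) := by
    nlinarith [mul_nonneg (by linarith : (0:ℤ) ≤ 2*b - a*e - 1) (by linarith : (0:ℤ) ≤ α),
      mul_nonneg (by linarith : (0:ℤ) ≤ a - 1) (by linarith : (0:ℤ) ≤ 2*β - α*e),
      mul_nonneg (by linarith : (0:ℤ) ≤ -2*e) (by linarith : (0:ℤ) ≤ 2*β - α*e),
      mul_nonneg hg (by linarith : (0:ℤ) ≤ α),
      mul_nonneg (by linarith : (0:ℤ) ≤ -e) (by linarith : (0:ℤ) ≤ α)]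
  have hMr : (1:ℝ) ≤ ((-(a * α * e) + a * β + b * α : ℤ) : ℝ) := by exact_mod_cast hM
  have hNr : ((2 * α + 2 * β - α * e - 2 * α * g - 1 : ℤ) : ℝ)
      ≤ ((4 - 2*e : ℤ) : ℝ) * ((-(a * α * e) + a * β + b * α : ℤ) : ℝ) := by
    exact_mod_cast hN
  have hs := Real.sqrt_nonneg (r / ℓ)
  have her : (6:ℝ) ≤ ((4 - 2*e : ℤ) : ℝ) := by
    have : (6:ℤ) ≤ 4 - 2*e := by linarith
    exact_mod_cast this
  have h1 : Real.sqrt (r / ℓ) < ((4 - 2*e : ℤ) : ℝ) := by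
    nlinarith [mul_nonneg hs (sub_nonneg.mpr hMr)]
  have h2 : r / ℓ < ((4 - 2*e : ℤ) : ℝ) ^ 2 := by
    rcases le_or_gt 0 (r / ℓ) with h0 | h0
    · have hsq := Real.sq_sqrt h0
      nlinarith
    · nlinarith
  have := (div_lt_iff₀ hℓ).mp h2
  linarith
end
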